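/- Let m ≥ 2 be an integer. There do not exist integers a_1, …, a_{m−1}, c_1, …, c_{m−1} and b_1, …, b_{m−2}, d_1, …, d_{m−2} satisfying simultaneously: (i) −(a_1 + a_{m−1}) + (c_1 + c_{m−1}) + Σ_{i=1}^{m−2} b_i = 1; (ii) −(a_i + a_{m−i}) − (b_{i−1} + b_{m−i}) + (c_i + c_{m−i}) + (d_{i−1} + d_{m−i}) = 0 for every i with 2 ≤ i ≤ m−1; and (iii) Σ_{i=1}^{m−2} d_i = 0. -/

import Mathlib

open SimpleGraph

variable {V : Type*}

/-- `T` is a spanning tree of `G`: a subgraph of `G` (on the same vertex set) that is a tree. -/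
def IsSpanningTree (G T : SimpleGraph V) : Prop :=
  T ≤ G ∧ T.IsTree

/-- `cutset G T e`: the set of edges of `G` whose endpoints lie in the two different
components of `T` with the edge `e` deleted. -/
def cutset (G T : SimpleGraph V) (e : Sym2 V) : Set (Sym2 V) :=
  {f | f ∈ G.edgeSet ∧ ∀ u v : V, f = s(u, v) → ¬ (T.deleteEdges {e}).Reachable u v}

/-- `cycset T f`: the edge set of the unique cycle of `T` with the edge `f` added
(an edge of the unicyclic connected graph `T + f` lies on the cycle iff deleting it
keeps the graph connected). -/
def cycset (T : SimpleGraph V) (f : Sym2 V) : Set (Sym2 V) :=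
  {e | e ∈ (T ⊔ fromEdgeSet {f}).edgeSet ∧
    ((T ⊔ fromEdgeSet {f}).deleteEdges {e}).Connected}

/-- An edge `e` of `T` is internally active if it is the minimum of `cutset G T e`. -/
def InternallyActive [LinearOrder (Sym2 V)] (G T : SimpleGraph V) (e : Sym2 V) : Prop :=
  e ∈ T.edgeSet ∧ ∀ f ∈ cutset G T e, ‹LinearOrder (Sym2 V)›.le e f

/-- `IN G T`: the set of internally inactive edges of `T`. -/
def IN [LinearOrder (Sym2 V)] (G T : SimpleGraph V) : Set (Sym2 V) :=
  {e | e ∈ T.edgeSet ∧ ¬ InternallyActive G T e}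

/-- `C` is the edge set of some cycle of `G`. -/
def IsCycleEdgeSet (G : SimpleGraph V) (C : Set (Sym2 V)) : Prop :=
  ∃ (v : V) (w : G.Walk v v), w.IsCycle ∧ C = {e | e ∈ w.edges}

/-- A broken circuit: the edge set of a cycle with its minimum edge removed. -/
def IsBrokenCircuit [LinearOrder (Sym2 V)] (G : SimpleGraph V) (B : Set (Sym2 V)) : Prop :=
  ∃ (C : Set (Sym2 V)) (e : Sym2 V),
    IsCycleEdgeSet G C ∧ e ∈ C ∧ (∀ f ∈ C, ‹LinearOrder (Sym2 V)›.le e f) ∧ B = C \ {e}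

/-- A set of edges is NBC if it contains no broken circuit. -/
def IsNBC [LinearOrder (Sym2 V)] (G : SimpleGraph V) (S : Set (Sym2 V)) : Prop :=
  ∀ B : Set (Sym2 V), IsBrokenCircuit G B → ¬ B ⊆ S

/-- `T` is an NBC spanning tree of `G`. -/
def IsNBCSpanningTree [LinearOrder (Sym2 V)] (G T : SimpleGraph V) : Prop :=
  IsSpanningTree G T ∧ IsNBC G T.edgeSet

/-- The edge set of `T` written as a list in increasing order. -/
noncomputable def edgeList [Fintype V] [LinearOrder (Sym2 V)] (T : SimpleGraph V) :
    List (Sym2 V) :=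
  (Set.toFinite T.edgeSet).toFinset.sort (‹LinearOrder (Sym2 V)›.le · ·)

/-- Lexicographic order on spanning trees via their sorted edge lists. -/
def treeLexLT [Fintype V] [LinearOrder (Sym2 V)] (T T' : SimpleGraph V) : Prop :=
  List.Lex (‹LinearOrder (Sym2 V)›.lt · ·) (edgeList T) (edgeList T')

set_option linter.unnecessarySeqFocus false

private lemma aux_reflect (m : ℕ) (hm : 2 ≤ m) (f : ℕ → ℤ) :
    ∑ i ∈ Finset.Icc 1 (m-1), (i:ℤ) * (f i + f (m-i)) =
      m * ∑ i ∈ Finset.Icc 1 (m-1), f i := by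
  have h1 : ∑ i ∈ Finset.Icc 1 (m-1), (i:ℤ) * f (m-i) =
      ∑ i ∈ Finset.Icc 1 (m-1), ((m-i : ℕ):ℤ) * f i := by
    apply Finset.sum_nbij' (fun i => m - i) (fun i => m - i) <;>
      simp only [Finset.mem_Icc] <;> intro i hi <;>
      first
        | omega
        | (congr 1 <;> omega)
  simp only [mul_add, Finset.sum_add_distrib, h1]
  rw [← Finset.sum_add_distrib, Finset.mul_sum]
  apply Finset.sum_congr rfl
  intro i hi
  simp only [Finset.mem_Icc] at hi
  have : ((m - i : ℕ):ℤ) = (m:ℤ) - i := by omega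
  rw [this]; ring

private lemma aux_shift (m : ℕ) (hm : 2 ≤ m) (f : ℕ → ℤ) :
    ∑ i ∈ Finset.Icc 2 (m-1), (i:ℤ) * (f (i-1) + f (m-i)) =
      ((m:ℤ)+1) * ∑ i ∈ Finset.Icc 1 (m-2), f i := by
  have h1 : ∑ i ∈ Finset.Icc 2 (m-1), (i:ℤ) * f (i-1) =
      ∑ i ∈ Finset.Icc 1 (m-2), ((i:ℤ)+1) * f i := by
    apply Finset.sum_nbij' (fun i => i - 1) (fun i => i + 1) <;>
      simp only [Finset.mem_Icc] <;> intro i hi <;>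
      first
        | omega
        | (congr 1 <;> omega)
  have h2 : ∑ i ∈ Finset.Icc 2 (m-1), (i:ℤ) * f (m-i) =
      ∑ i ∈ Finset.Icc 1 (m-2), ((m-i : ℕ):ℤ) * f i := by
    apply Finset.sum_nbij' (fun i => m - i) (fun i => m - i) <;>
      simp only [Finset.mem_Icc] <;> intro i hi <;>
      first
        | omega
        | (congr 1 <;> omega)
  simp only [mul_add, Finset.sum_add_distrib, h1, h2]
  rw [← Finset.sum_add_distrib, Finset.mul_sum]
  apply Finset.sum_congr rfl
  intro i hi
  simp only [Finset.mem_Icc] at hi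
  have : ((m - i : ℕ):ℤ) = (m:ℤ) - i := by omega
  rw [this]; ring

/-- the system of linear Diophantine equations arising in the proof of
the existence of torsion of order dividing `m` in chromatic homology over `ℤ[x]/(x^m)`
has no integer solution. -/
theorem no_integer_solution_torsion_system (m : ℕ) (hm : 2 ≤ m) :
    ¬ ∃ a b c d : ℕ → ℤ,
      (-(a 1 + a (m - 1)) + (c 1 + c (m - 1)) + ∑ i ∈ Finset.Icc 1 (m - 2), b i = 1) ∧
      (∀ i : ℕ, 2 ≤ i → i ≤ m - 1 →
        -(a i + a (m - i)) - (b (i - 1) + b (m - i)) +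
          (c i + c (m - i)) + (d (i - 1) + d (m - i)) = 0) ∧
      (∑ i ∈ Finset.Icc 1 (m - 2), d i = 0) := by
  rintro ⟨a, b, c, d, h1, h2, h3⟩
  have hins : Finset.Icc 1 (m-1) = insert 1 (Finset.Icc 2 (m-1)) := by
    ext x; simp only [Finset.mem_Icc, Finset.mem_insert]; omega
  have hnot : (1 : ℕ) ∉ Finset.Icc 2 (m-1) := by simp
  -- weighted sum of the middle equations
  have hsum2 :
      -(∑ i ∈ Finset.Icc 2 (m-1), (i:ℤ) * (a i + a (m-i)))
        - (∑ i ∈ Finset.Icc 2 (m-1), (i:ℤ) * (b (i-1) + b (m-i)))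
        + (∑ i ∈ Finset.Icc 2 (m-1), (i:ℤ) * (c i + c (m-i)))
        + (∑ i ∈ Finset.Icc 2 (m-1), (i:ℤ) * (d (i-1) + d (m-i))) = 0 := by
    rw [← Finset.sum_neg_distrib, ← Finset.sum_sub_distrib, ← Finset.sum_add_distrib,
      ← Finset.sum_add_distrib]
    apply Finset.sum_eq_zero
    intro i hi
    simp only [Finset.mem_Icc] at hi
    have := h2 i hi.1 hi.2
    linear_combination (i : ℤ) * this
  have hA : ∑ i ∈ Finset.Icc 2 (m-1), (i:ℤ) * (a i + a (m-i)) =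
      (m : ℤ) * ∑ i ∈ Finset.Icc 1 (m-1), a i - (a 1 + a (m-1)) := by
    have h := aux_reflect m hm a
    rw [hins, Finset.sum_insert hnot, ← hins] at h
    push_cast at h
    linarith
  have hC : ∑ i ∈ Finset.Icc 2 (m-1), (i:ℤ) * (c i + c (m-i)) =
      (m : ℤ) * ∑ i ∈ Finset.Icc 1 (m-1), c i - (c 1 + c (m-1)) := by
    have h := aux_reflect m hm c
    rw [hins, Finset.sum_insert hnot, ← hins] at h
    push_cast at h
    linarith
  have hB := aux_shift m hm b
  have hD := aux_shift m hm d
  rw [h3, mul_zero] at hD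
  have final : (m : ℤ) * (-(∑ i ∈ Finset.Icc 1 (m-1), a i)
      + (∑ i ∈ Finset.Icc 1 (m-1), c i) - (∑ i ∈ Finset.Icc 1 (m-2), b i)) = 1 := by
    linear_combination h1 + hsum2 + hA - hC + hB - hD
  have hdvd : (m : ℤ) ∣ 1 := ⟨_, final.symm⟩
  have := Int.le_of_dvd one_pos hdvd
  omega
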